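/- arXiv:1110.4126 — 2 statements merged into one kernel-verified Lean document; each statement's English description precedes it below -/
import Mathlib

section
/- Let N and N_r be integers with 2 ≤ N ≤ N_r, set n = N·N_r, and for N ≤ k ≤ (N−1)·(N_r+1) + 1 define G_{n,k}(u) = ∑_{i=0}^{k−1} [n!·C(k−1,i)·(−1)^i / ((n−k+i+1)·(n−k)!·(k−1)!)] · u^{n−k+i+1}. Let p_N, …, p_{(N−1)(N_r+1)+1} be nonnegative reals summing to 1. Then lim_{u→0⁺} [∑_{k=N}^{(N−1)(N_r+1)+1} p_k · G_{n,k}(u)] / u^{N_r − N + 1} = p_{(N−1)(N_r+1)+1} · (N·N_r)! / ((N_r − N + 1) · (N_r − N)! · ((N−1)·(N_r+1))!). -/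
/-- `G n k u = ∑_{i=0}^{k−1} n!·C(k−1,i)·(−1)^i / ((n−k+i+1)(n−k)!(k−1)!) · u^{n−k+i+1}`,
the CDF of the `k`-th largest of `n` i.i.d. random variables expressed as a
polynomial in the common per-entry CDF value `u`. -/
noncomputable def orderCDF (n k : ℕ) (u : ℝ) : ℝ :=
  ∑ i ∈ Finset.range k,
    ((n.factorial : ℝ) * (((k - 1).choose i : ℝ)) * (-1 : ℝ) ^ i
        / (((n : ℝ) - (k : ℝ) + (i : ℝ) + 1) * ((n - k).factorial : ℝ)
            * ((k - 1).factorial : ℝ)))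
      * u ^ (n - k + i + 1)

/-!
Every monomial of `G_{n,k}` has degree at least `n - k + 1`, and its lowest one,
`u^{n-k+1}`, carries the coefficient `n! / ((n-k+1) (n-k)! (k-1)!)`. Hence
`G_{n,k}(u) / u^e` tends to `0` when `e < n - k + 1` and to that coefficient when
`e = n - k + 1`. With `n = N Nr` and `e = Nr - N + 1 = n - K + 1` for the largest index
`K = (N-1)(Nr+1)+1`, only the term `k = K` survives in the limit.
-/

open Filter Topology Finset

theorem tendsto_sum_mul_pow_div_pow {𝕜 ι : Type*} [Field 𝕜] [TopologicalSpace 𝕜]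
    [IsTopologicalRing 𝕜] (s : Finset ι) (c : ι → 𝕜) (d : ι → ℕ) {e : ℕ}
    (he : ∀ i ∈ s, e ≤ d i) :
    Tendsto (fun u : 𝕜 => (∑ i ∈ s, c i * u ^ d i) / u ^ e) (𝓝[≠] 0)
      (𝓝 (∑ i ∈ s, if d i = e then c i else 0)) := by
  have hcont : Continuous fun u : 𝕜 => ∑ i ∈ s, c i * u ^ (d i - e) := by fun_prop
  have hzero : ∑ i ∈ s, c i * (0 : 𝕜) ^ (d i - e) = ∑ i ∈ s, if d i = e then c i else 0 :=
    sum_congr rfl fun i hi => by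
      have := he i hi
      rw [zero_pow_eq, mul_ite, mul_one, mul_zero]
      exact if_congr (by omega) rfl rfl
  refine (hzero ▸ hcont.tendsto 0).mono_left nhdsWithin_le_nhds |>.congr' ?_
  filter_upwards [self_mem_nhdsWithin] with u (hu : u ≠ 0)
  rw [sum_div]
  exact sum_congr rfl fun i hi => by rw [pow_sub₀ u hu (he i hi), mul_div_assoc, div_eq_mul_inv]

noncomputable def orderCDFCoeff (n k i : ℕ) : ℝ :=
  (n.factorial : ℝ) * (((k - 1).choose i : ℝ)) * (-1 : ℝ) ^ i
    / (((n : ℝ) - (k : ℝ) + (i : ℝ) + 1) * ((n - k).factorial : ℝ) * ((k - 1).factorial : ℝ))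

theorem orderCDF_eq_sum_coeff (n k : ℕ) (u : ℝ) :
    orderCDF n k u = ∑ i ∈ range k, orderCDFCoeff n k i * u ^ (n - k + i + 1) :=
  rfl

theorem orderCDFCoeff_zero (n k : ℕ) :
    orderCDFCoeff n k 0 = (n.factorial : ℝ)
      / (((n : ℝ) - (k : ℝ) + 1) * ((n - k).factorial : ℝ) * ((k - 1).factorial : ℝ)) := by
  simp [orderCDFCoeff]

theorem tendsto_orderCDF_div_pow_of_lt {n k e : ℕ} (he : e < n - k + 1) :
    Tendsto (fun u => orderCDF n k u / u ^ e) (𝓝[≠] 0) (𝓝 0) := by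
  simp only [orderCDF_eq_sum_coeff]
  have h := tendsto_sum_mul_pow_div_pow (range k) (orderCDFCoeff n k)
    (fun i => n - k + i + 1) (e := e) fun i _ => by omega
  rwa [sum_eq_zero fun i _ => if_neg (by omega)] at h

theorem tendsto_orderCDF_div_pow_self {n k : ℕ} (hk : 0 < k) :
    Tendsto (fun u => orderCDF n k u / u ^ (n - k + 1)) (𝓝[≠] 0)
      (𝓝 (orderCDFCoeff n k 0)) := by
  simp only [orderCDF_eq_sum_coeff]
  have h := tendsto_sum_mul_pow_div_pow (range k) (orderCDFCoeff n k)
    (fun i => n - k + i + 1) (e := n - k + 1) fun i _ => by omega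
  rwa [sum_eq_single_of_mem 0 (mem_range.2 hk) fun i _ hi => if_neg (by omega), if_pos rfl]
    at h

theorem mul_eq_pred_mul_succ_add_one_add_sub {N Nr : ℕ} (hN : 1 ≤ N) (hNr : N ≤ Nr) :
    N * Nr = (N - 1) * (Nr + 1) + 1 + (Nr - N) := by
  obtain ⟨M, rfl⟩ : ∃ M, N = M + 1 := ⟨N - 1, by omega⟩
  simp only [Nat.add_sub_cancel]
  ring_nf
  omega

theorem SRS_diversity_order_general (N Nr : ℕ) (hN : 2 ≤ N) (hNr : N ≤ Nr)
    (p : ℕ → ℝ) :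
    Filter.Tendsto
      (fun u : ℝ =>
        (∑ k ∈ Finset.Icc N ((N - 1) * (Nr + 1) + 1), p k * orderCDF (N * Nr) k u)
          / u ^ (Nr - N + 1))
      (nhdsWithin 0 (Set.Ioi 0))
      (nhds (p ((N - 1) * (Nr + 1) + 1) * ((N * Nr).factorial : ℝ)
        / (((Nr : ℝ) - (N : ℝ) + 1) * ((Nr - N).factorial : ℝ)
            * (((N - 1) * (Nr + 1)).factorial : ℝ)))) := by
  have hn := mul_eq_pred_mul_succ_add_one_add_sub (by omega) hNr
  have hNK : N ≤ (N - 1) * (Nr + 1) + 1 := by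
    have := Nat.le_mul_of_pos_right (N - 1) (by positivity : 0 < Nr + 1)
    omega
  set K := (N - 1) * (Nr + 1) + 1 with hK
  set n := N * Nr
  clear_value K n
  have hterm : ∀ k ∈ Icc N K, Tendsto (fun u => p k * (orderCDF n k u / u ^ (Nr - N + 1)))
      (𝓝[≠] 0) (𝓝 (if K = k then p k * orderCDFCoeff n K 0 else 0)) := by
    intro k hk
    rw [mem_Icc] at hk
    rcases eq_or_ne K k with rfl | hkK
    · rw [if_pos rfl, show Nr - N + 1 = n - K + 1 by omega]
      refine (tendsto_orderCDF_div_pow_self ?_).const_mul _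
      omega
    · have hlt : Nr - N + 1 < n - k + 1 := by omega
      simpa [hkK] using (tendsto_orderCDF_div_pow_of_lt hlt).const_mul (p k)
  have hlim := tendsto_finsetSum _ hterm
  rw [sum_ite_eq, if_pos (right_mem_Icc.2 (by omega)), orderCDFCoeff_zero,
    ← Nat.cast_sub (by omega : K ≤ n), show n - K = Nr - N by omega, Nat.cast_sub hNr,
    show K - 1 = (N - 1) * (Nr + 1) by omega, ← mul_div_assoc] at hlim
  refine (hlim.mono_left (nhdsWithin_mono _ fun u (hu : 0 < u) => hu.ne')).congr fun u => ?_
  simp only [sum_div, mul_div_assoc]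

/-- Diversity order of SRS: for `2 ≤ N ≤ Nr`, `n = N·Nr`, and nonnegative reals
`p_N, …, p_{(N−1)(Nr+1)+1}` summing to `1`,
`lim_{u→0⁺} (∑ₖ p_k · G_{n,k}(u)) / u^{Nr−N+1}
   = p_{(N−1)(Nr+1)+1} · (N·Nr)! / ((Nr−N+1) · (Nr−N)! · ((N−1)·(Nr+1))!)`. -/
theorem SRS_diversity_order (N Nr : ℕ) (hN : 2 ≤ N) (hNr : N ≤ Nr)
    (p : ℕ → ℝ) (hp0 : ∀ k ∈ Finset.Icc N ((N - 1) * (Nr + 1) + 1), 0 ≤ p k)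
    (hp1 : ∑ k ∈ Finset.Icc N ((N - 1) * (Nr + 1) + 1), p k = 1) :
    Filter.Tendsto
      (fun u : ℝ =>
        (∑ k ∈ Finset.Icc N ((N - 1) * (Nr + 1) + 1), p k * orderCDF (N * Nr) k u)
          / u ^ (Nr - N + 1))
      (nhdsWithin 0 (Set.Ioi 0))
      (nhds (p ((N - 1) * (Nr + 1) + 1) * ((N * Nr).factorial : ℝ)
        / (((Nr : ℝ) - (N : ℝ) + 1) * ((Nr - N).factorial : ℝ)
            * (((N - 1) * (Nr + 1)).factorial : ℝ)))) :=
  SRS_diversity_order_general N Nr hN hNr p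
end

section
/- Let N_r ≥ 2 be an integer, define Q_SRS(u) as the two-user SRS outage bound polynomial (with n = 2N_r): Q_SRS(u) = [(N_r−1)/(2N_r−1)]·G_{n,2}(u) + [(N_r+1)/(2(2N_r−1))]·G_{n,3}(u) + ∑_{k=4}^{N_r+1} [2·N_r·C(N_r,k−1)/((2N_r−(k−1))·C(2N_r,k−1))]·G_{n,k}(u) + ∑_{k=4}^{N_r+2} [2·(N_r−1)·C(N_r,k−2)/((2N_r−(k−2))·(2N_r−(k−1))·C(2N_r,k−2))]·G_{n,k}(u), where G_{n,k}(u) = ∑_{i=0}^{k−1} [n!·C(k−1,i)·(−1)^i / ((n−k+i+1)·(n−k)!·(k−1)!)] · u^{n−k+i+1}, and define Q_naive(u) = u^{N_r−1}·(1 + u − u^{N_r}). Then lim_{u→0⁺} Q_naive(u)/Q_SRS(u) = (N_r+1)/2. -/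
/-- Two-user SRS outage bound polynomial (with `n = 2·Nr`). -/
noncomputable def Q_SRS (Nr : ℕ) (u : ℝ) : ℝ :=
  ((Nr : ℝ) - 1) / (2 * (Nr : ℝ) - 1) * orderCDF (2 * Nr) 2 u
    + ((Nr : ℝ) + 1) / (2 * (2 * (Nr : ℝ) - 1)) * orderCDF (2 * Nr) 3 u
    + ∑ k ∈ Finset.Icc 4 (Nr + 1),
        (2 * (Nr : ℝ) * (Nr.choose (k - 1) : ℝ))
          / ((2 * (Nr : ℝ) - ((k : ℝ) - 1)) * (((2 * Nr).choose (k - 1) : ℝ)))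
          * orderCDF (2 * Nr) k u
    + ∑ k ∈ Finset.Icc 4 (Nr + 2),
        (2 * ((Nr : ℝ) - 1) * (Nr.choose (k - 2) : ℝ))
          / ((2 * (Nr : ℝ) - ((k : ℝ) - 2)) * (2 * (Nr : ℝ) - ((k : ℝ) - 1))
              * (((2 * Nr).choose (k - 2) : ℝ)))
          * orderCDF (2 * Nr) k u

/-! Each `orderCDF (2 * Nr) k` vanishes at `0` to order `2 * Nr - k + 1 ≥ Nr - 1`, with leading
coefficient `(2 * Nr).choose (k - 1)`. After dividing by `u ^ (Nr - 1)`, only the `k = Nr + 2`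
term of `Q_SRS` survives at `u = 0`, and its value `2 / (Nr + 1)` follows from
`C(2Nr, Nr + 1) (Nr + 1) = C(2Nr, Nr) Nr`. The naive bound divided by `u ^ (Nr - 1)` tends to `1`. -/

open Filter Topology Finset

lemma orderCDF_eq_pow_mul (n k : ℕ) (u : ℝ) :
    orderCDF n k u = u ^ (n - k + 1) * ∑ i ∈ range k, orderCDFCoeff n k i * u ^ i := by
  rw [mul_sum]
  refine sum_congr rfl fun i _ => ?_
  rw [show n - k + i + 1 = n - k + 1 + i by omega, pow_add]
  unfold orderCDFCoeff
  ring

lemma orderCDFCoeff_zero_s18 {n k : ℕ} (hk : 1 ≤ k) (hkn : k ≤ n) :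
    orderCDFCoeff n k 0 = n.choose (k - 1) := by
  obtain ⟨j, rfl⟩ : ∃ j, k = j + 1 := ⟨k - 1, by omega⟩
  obtain ⟨l, rfl⟩ : ∃ l, n = j + 1 + l := ⟨n - (j + 1), by omega⟩
  rw [orderCDFCoeff, Nat.add_sub_cancel, Nat.cast_choose ℝ (by omega : j ≤ j + 1 + l),
    show j + 1 + l - (j + 1) = l by omega, show j + 1 + l - j = l + 1 by omega,
    Nat.factorial_succ l, Nat.choose_zero_right]
  push_cast
  ring

-- With `0 ^ 0 = 1`, the limit is the leading coefficient when `m` is the exact order, else `0`.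
lemma tendsto_orderCDF_div_pow {n k m : ℕ} (hk : 1 ≤ k) (hkn : k ≤ n) (hm : m ≤ n - k + 1) :
    Tendsto (fun u => orderCDF n k u / u ^ m) (𝓝[≠] 0)
      (𝓝 (0 ^ (n - k + 1 - m) * n.choose (k - 1))) := by
  have hcont : Continuous fun u : ℝ =>
      u ^ (n - k + 1 - m) * ∑ i ∈ range k, orderCDFCoeff n k i * u ^ i := by
    fun_prop
  have h0 : ∑ i ∈ range k, orderCDFCoeff n k i * (0 : ℝ) ^ i = n.choose (k - 1) := by
    obtain ⟨j, rfl⟩ : ∃ j, k = j + 1 := ⟨k - 1, by omega⟩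
    simp [sum_range_succ', orderCDFCoeff_zero_s18 hk hkn]
  have hlim := (hcont.tendsto 0).mono_left (nhdsWithin_le_nhds (s := {0}ᶜ))
  rw [h0] at hlim
  refine hlim.congr' ?_
  filter_upwards [self_mem_nhdsWithin] with u (hu : u ≠ 0)
  rw [orderCDF_eq_pow_mul, ← Nat.sub_add_cancel hm, pow_add, Nat.add_sub_cancel]
  field_simp

lemma tendsto_Q_SRS_div_pow {Nr : ℕ} (hNr : 2 ≤ Nr) :
    Tendsto (fun u => Q_SRS Nr u / u ^ (Nr - 1)) (𝓝[≠] 0) (𝓝 (2 / ((Nr : ℝ) + 1))) := by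
  have hG (k : ℕ) (hk : 1 ≤ k) (hkN : k ≤ Nr + 2) :
      Tendsto (fun u => orderCDF (2 * Nr) k u / u ^ (Nr - 1)) (𝓝[≠] 0)
        (𝓝 (0 ^ (Nr + 2 - k) * (2 * Nr).choose (k - 1))) := by
    have h := tendsto_orderCDF_div_pow (n := 2 * Nr) (m := Nr - 1) hk (by omega) (by omega)
    rwa [show 2 * Nr - k + 1 - (Nr - 1) = Nr + 2 - k by omega] at h
  have hG0 (c : ℝ) (k : ℕ) (hk : 1 ≤ k) (hkN : k ≤ Nr + 1) :
      Tendsto (fun u => c * (orderCDF (2 * Nr) k u / u ^ (Nr - 1))) (𝓝[≠] 0) (𝓝 0) := by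
    simpa [zero_pow (by omega : Nr + 2 - k ≠ 0)] using (hG k hk (by omega)).const_mul c
  have hchoose : ((2 * Nr).choose (Nr + 1) : ℝ) * (Nr + 1) = (2 * Nr).choose Nr * Nr := by
    have h := Nat.choose_succ_right_eq (2 * Nr) Nr
    rw [show 2 * Nr - Nr = Nr by omega] at h
    exact_mod_cast h
  simp only [Q_SRS, add_div, sum_div, mul_div_assoc, sum_Icc_succ_top (by omega : 4 ≤ Nr + 2)]
  rw [show (2 : ℝ) / (Nr + 1)
      = 0 + 0 + ∑ _k ∈ Icc 4 (Nr + 1), 0 + (∑ _k ∈ Icc 4 (Nr + 1), 0 + 2 / (Nr + 1)) by simp]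
  refine ((hG0 _ 2 (by omega) (by omega)).add (hG0 _ 3 (by omega) (by omega))).add
    (tendsto_finsetSum _ fun k hk => hG0 _ k (by grind) (by grind)) |>.add
    ((tendsto_finsetSum _ fun k hk => hG0 _ k (by grind) (by grind)).add ?_)
  convert (hG (Nr + 2) (by omega) le_rfl).const_mul _ using 2
  rw [show Nr + 1 + 1 - 2 = Nr by omega, Nat.sub_self, pow_zero, one_mul, Nat.choose_self,
    show Nr + 2 - 1 = Nr + 1 by omega]
  have : (2 * Nr).choose Nr ≠ 0 := (Nat.choose_pos (by omega)).ne'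
  have : (Nr : ℝ) - 1 ≠ 0 := by
    rw [sub_ne_zero]; exact_mod_cast (by omega : Nr ≠ 1)
  push_cast
  rw [show (2 * Nr - ((Nr : ℝ) + 1 + 1 - 2)) * (2 * Nr - ((Nr : ℝ) + 1 + 1 - 1)) = Nr * (Nr - 1)
    by ring]
  field_simp
  linear_combination -hchoose

/-- Array gain advantage of SRS over naive RS: for `Nr ≥ 2`, with
`Q_naive(u) = u^{Nr−1}·(1 + u − u^{Nr})`,
`lim_{u→0⁺} Q_naive(u)/Q_SRS(u) = (Nr+1)/2`. -/
theorem naive_over_SRS_array_gain (Nr : ℕ) (hNr : 2 ≤ Nr) :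
    Filter.Tendsto
      (fun u : ℝ => (u ^ (Nr - 1) * (1 + u - u ^ Nr)) / Q_SRS Nr u)
      (nhdsWithin 0 (Set.Ioi 0)) (nhds (((Nr : ℝ) + 1) / 2)) := by
  have hnaive : Tendsto (fun u : ℝ => 1 + u - u ^ Nr) (𝓝[>] 0) (𝓝 1) := by
    have h := ((by fun_prop : Continuous fun u : ℝ => 1 + u - u ^ Nr).tendsto 0).mono_left
      (nhdsWithin_le_nhds (s := Set.Ioi 0))
    simpa [zero_pow (by omega : Nr ≠ 0)] using h
  have hSRS := (tendsto_Q_SRS_div_pow hNr).mono_left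
    (nhdsWithin_mono 0 fun _ hu => ne_of_gt hu)
  have h := hnaive.div hSRS (by positivity)
  rw [one_div_div] at h
  refine h.congr fun u => ?_
  rw [Pi.div_apply, div_div_eq_mul_div, mul_comm]
end
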